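/- There is (up to isomorphism) a unique group of order 16 that has both a quotient isomorphic to D₄ and a quotient isomorphic to Q₈, namely SmallGroup(16,4), and this group H has normal subgroups N₁, N₂ with N₁ ∩ N₂ = {e}, H/N₁ ≅ D₄ and H/N₂ ≅ ℤ/4ℤ. -/
import Mathlib

open QuaternionGroup DihedralGroup Function

private abbrev Q8' := QuaternionGroup 2
private abbrev D4' := DihedralGroup 4
private abbrev Vab := Multiplicative (ZMod 2 × ZMod 2)

private def pqf : Q8' → Vab
  | .a i => Multiplicative.ofAdd (i.val, 0)
  | .xa i => Multiplicative.ofAdd (i.val, 1)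

private def pdf : D4' → Vab
  | .r i => Multiplicative.ofAdd (i.val, 0)
  | .sr i => Multiplicative.ofAdd (i.val, 1)

private def ψ : Q8' →* Vab := { toFun := pqf, map_one' := by decide, map_mul' := by decide }
private def χ : D4' →* Vab := { toFun := pdf, map_one' := by decide, map_mul' := by decide }

private def Φ : Q8' × D4' →* Vab :=
  (ψ.comp (MonoidHom.fst _ _)) * (χ.comp (MonoidHom.snd _ _))⁻¹

/-- The fiber product of `Q8` and `D4` over their common abelianization;
this is `SmallGroup(16,4) = C4 ⋊ C4`. -/
private def GG : Subgroup (Q8' × D4') := Φ.ker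

private instance : DecidablePred (· ∈ GG) := fun x => inferInstanceAs (Decidable (Φ x = 1))

private lemma cardGG : Nat.card ↥GG = 16 := by
  rw [Nat.card_eq_fintype_card]; decide

private def fQ : ↥GG →* Q8' := (MonoidHom.fst _ _).comp GG.subtype
private def fD : ↥GG →* D4' := (MonoidHom.snd _ _).comp GG.subtype

private lemma fQ_surj : Surjective fQ := by decide
private lemma fD_surj : Surjective fD := by decide

/-- exponent of `b` in `a^m b^n` written in fiber-product coordinates -/
private def c0 : Q8' × D4' → ZMod 4
  | (.a i, .r j) => i - j
  | (.xa k, .sr j) => k - j + 1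
  | _ => 0

set_option maxRecDepth 40000 in
private lemma c0_hom : ∀ x y : Q8' × D4', x ∈ GG → y ∈ GG → c0 (x * y) = c0 x + c0 y := by
  decide

private def cG : ↥GG →* Multiplicative (ZMod 4) where
  toFun x := Multiplicative.ofAdd (c0 x.1)
  map_one' := by decide
  map_mul' := fun x y => congrArg Multiplicative.ofAdd (c0_hom x.1 y.1 x.2 y.2)

private lemma cG_surj : Surjective cG := by decide

private lemma GG_bot : ∀ z : ↥GG, fD z = 1 → cG z = 1 → z = 1 := by decide

-- six matrices in GL(2, ZMod 2), acting on Vab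
private def lin (a b c d : ZMod 2) : Vab → Vab := fun v =>
  Multiplicative.ofAdd (a * v.toAdd.1 + b * v.toAdd.2, c * v.toAdd.1 + d * v.toAdd.2)

set_option maxRecDepth 1000000 in
set_option synthInstance.maxHeartbeats 0 in
set_option maxHeartbeats 0 in
set_option synthInstance.maxSize 5000 in
private lemma classify_t : ∀ t : Vab → Vab, (∀ a b : Vab, t a = t b → a = b) →
    (∀ a b, t (a * b) = t a * t b) →
    ((∀ v, t v = lin 1 0 0 1 v) ∨ (∀ v, t v = lin 0 1 1 0 v) ∨ (∀ v, t v = lin 1 1 0 1 v) ∨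
     (∀ v, t v = lin 1 0 1 1 v) ∨ (∀ v, t v = lin 0 1 1 1 v) ∨
     (∀ v, t v = lin 1 1 1 0 v)) := by decide

/-- extension of a generator assignment to a map `Q8 → Q8` -/
private def ext' (A X : Q8') : Q8' → Q8'
  | .a i => A ^ i.val
  | .xa i => X * A ^ i.val

private lemma lift_t : ∀ t : Vab → Vab, (∀ a b : Vab, t a = t b → a = b) →
    (∀ a b, t (a * b) = t a * t b) →
    ∃ s : Q8' → Q8', (∀ a b : Q8', s a = s b → a = b) ∧ (∀ a b, s (a * b) = s a * s b) ∧
      ∀ q, ψ (s q) = t (ψ q) := by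
  intro t h1 h2
  rcases classify_t t h1 h2 with h | h | h | h | h | h
  · exact ⟨ext' (.a 1) (.xa 0), by decide, by decide,
      fun q => ((by decide : ∀ q, ψ (ext' (.a 1) (.xa 0) q) = lin 1 0 0 1 (ψ q)) q).trans
        (h (ψ q)).symm⟩
  · exact ⟨ext' (.xa 0) (.a 1), by decide, by decide,
      fun q => ((by decide : ∀ q, ψ (ext' (.xa 0) (.a 1) q) = lin 0 1 1 0 (ψ q)) q).trans
        (h (ψ q)).symm⟩
  · exact ⟨ext' (.a 1) (.xa 1), by decide, by decide,
      fun q => ((by decide : ∀ q, ψ (ext' (.a 1) (.xa 1) q) = lin 1 1 0 1 (ψ q)) q).trans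
        (h (ψ q)).symm⟩
  · exact ⟨ext' (.xa 1) (.xa 0), by decide, by decide,
      fun q => ((by decide : ∀ q, ψ (ext' (.xa 1) (.xa 0) q) = lin 1 0 1 1 (ψ q)) q).trans
        (h (ψ q)).symm⟩
  · exact ⟨ext' (.xa 0) (.xa 1), by decide, by decide,
      fun q => ((by decide : ∀ q, ψ (ext' (.xa 0) (.xa 1) q) = lin 0 1 1 1 (ψ q)) q).trans
        (h (ψ q)).symm⟩
  · exact ⟨ext' (.xa 1) (.a 1), by decide, by decide,
      fun q => ((by decide : ∀ q, ψ (ext' (.xa 1) (.a 1) q) = lin 1 1 1 0 (ψ q)) q).trans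
        (h (ψ q)).symm⟩

private lemma ψ_surj : Surjective ψ := by decide
private lemma center_Q8 : ∀ q : Q8', (∀ p, p * q = q * p) → ψ q = 1 := by decide
private lemma center_D4 : ∀ d : D4', (∀ p, p * d = d * p) → χ d = 1 := by decide

private lemma no_iso (e : Q8' ≃* D4') : False := by
  have key : ∀ x : Q8', x * x = 1 ↔ e x * e x = 1 := by
    intro x
    constructor
    · intro h; rw [← map_mul, h, map_one]
    · intro h; apply e.injective; rw [map_mul, map_one, h]
  have : Fintype.card {x : Q8' // x * x = 1} = Fintype.card {x : D4' // x * x = 1} :=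
    Fintype.card_congr (e.toEquiv.subtypeEquiv key)
  have h1 : Fintype.card {x : Q8' // x * x = 1} = 2 := by decide
  have h2 : Fintype.card {x : D4' // x * x = 1} = 6 := by decide
  omega

private lemma card_ker_of_surj {H B : Type*} [Group H] [Group B] (f : H →* B)
    (hf : Surjective f) : Nat.card H = Nat.card B * Nat.card f.ker := by
  rw [Subgroup.card_eq_card_quotient_mul_card_subgroup f.ker,
    Nat.card_congr (QuotientGroup.quotientKerEquivOfSurjective f hf).toEquiv]

/-- In a subgroup of cardinality two, nontrivial elements are equal. -/
private lemma eq_of_card_two {H : Type*} [Group H] {N : Subgroup H} (h : Nat.card N = 2)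
    {x y : H} (hx : x ∈ N) (hy : y ∈ N) (hx1 : x ≠ 1) (hy1 : y ≠ 1) : x = y := by
  rw [Nat.card_eq_two_iff] at h
  obtain ⟨a, b, hab, huniv⟩ := h
  have mem : ∀ z : N, z = a ∨ z = b := by
    intro z
    have : z ∈ ({a, b} : Set N) := huniv ▸ Set.mem_univ z
    simpa using this
  have h1 := mem ⟨1, N.one_mem⟩
  have hx' := mem ⟨x, hx⟩
  have hy' := mem ⟨y, hy⟩
  rcases h1 with h1 | h1 <;> rcases hx' with hx' | hx' <;> rcases hy' with hy' | hy' <;>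
    first
      | (exact absurd (congrArg Subtype.val (hx'.trans h1.symm)) hx1)
      | (exact absurd (congrArg Subtype.val (hy'.trans h1.symm)) hy1)
      | (exact congrArg Subtype.val (hx'.trans hy'.symm))

private lemma central_of_card_two {H : Type*} [Group H] {N : Subgroup H} [hn : N.Normal]
    (h : Nat.card N = 2) {x : H} (hx : x ∈ N) (g : H) : g * x * g⁻¹ = x := by
  by_cases hx1 : x = 1
  · simp [hx1]
  · have hc : g * x * g⁻¹ ∈ N := hn.conj_mem x hx g
    have hne : g * x * g⁻¹ ≠ 1 := by
      intro hh
      apply hx1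
      have := congrArg (fun z => g⁻¹ * z * g) hh
      simpa [mul_assoc] using this
    exact eq_of_card_two h hc hx hne hx1

/-- Key lemma: any group of order 16 with surjections onto both D4 and Q8 is isomorphic
to the fiber product `GG`. -/
private lemma key_iso (H : Type) [Group H] (hcard : Nat.card H = 16)
    (hd : ∃ f : H →* D4', Surjective f) (hq : ∃ f : H →* Q8', Surjective f) :
    Nonempty (H ≃* ↥GG) := by
  obtain ⟨g, hg⟩ := hd
  obtain ⟨f, hf⟩ := hq
  have hQcard : Nat.card Q8' = 8 := by rw [Nat.card_eq_fintype_card]; decide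
  have hDcard : Nat.card D4' = 8 := by rw [Nat.card_eq_fintype_card]; decide
  have hVcard : Nat.card Vab = 4 := by rw [Nat.card_eq_fintype_card]; decide
  haveI hFin : Finite H := Nat.finite_of_card_ne_zero (by omega)
  have hkf : Nat.card f.ker = 2 := by
    have h := card_ker_of_surj f hf; rw [hcard, hQcard] at h; omega
  have hkg : Nat.card g.ker = 2 := by
    have h := card_ker_of_surj g hg; rw [hcard, hDcard] at h; omega
  -- the two kernels are distinct
  have hker_ne : f.ker ≠ g.ker := by
    intro hEq
    exact no_iso (((QuotientGroup.quotientKerEquivOfSurjective f hf).symm.trans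
      (QuotientGroup.quotientMulEquivOfEq hEq)).trans
      (QuotientGroup.quotientKerEquivOfSurjective g hg))
  -- the composites to the common abelianization
  set u : H →* Vab := ψ.comp f with hu
  set v : H →* Vab := χ.comp g with hv
  have husurj : Surjective u := ψ_surj.comp hf
  have hvsurj : Surjective v := by
    have hχ : Surjective χ := by decide
    exact hχ.comp hg
  have hku : Nat.card u.ker = 4 := by
    have h := card_ker_of_surj u husurj; rw [hcard, hVcard] at h; omega
  have hkv : Nat.card v.ker = 4 := by
    have h := card_ker_of_surj v hvsurj; rw [hcard, hVcard] at h; omega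
  -- kernels of f and g are contained in both ker u and ker v
  have hfu : f.ker ≤ u.ker := by
    intro x hx
    have : f x = 1 := hx
    show ψ (f x) = 1
    rw [this, map_one]
  have hgv : g.ker ≤ v.ker := by
    intro x hx
    have : g x = 1 := hx
    show χ (g x) = 1
    rw [this, map_one]
  have hgu : g.ker ≤ u.ker := by
    intro x hx
    show ψ (f x) = 1
    apply center_Q8
    intro p
    obtain ⟨y, rfl⟩ := hf p
    have hcent := central_of_card_two hkg hx y
    have : f (y * x * y⁻¹) = f x := by rw [hcent]
    rw [map_mul, map_mul, map_inv] at this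
    calc f y * f x = f y * f x * (f y)⁻¹ * f y := by group
    _ = f x * f y := by rw [this]
  have hfv : f.ker ≤ v.ker := by
    intro x hx
    show χ (g x) = 1
    apply center_D4
    intro p
    obtain ⟨y, rfl⟩ := hg p
    have hcent := central_of_card_two hkf hx y
    have : g (y * x * y⁻¹) = g x := by rw [hcent]
    rw [map_mul, map_mul, map_inv] at this
    calc g y * g x = g y * g x * (g y)⁻¹ * g y := by group
    _ = g x * g y := by rw [this]
  -- hence ker u = ker f ⊔ ker g = ker v
  have hkeq : u.ker = v.ker := by
    set J := f.ker ⊔ g.ker with hJ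
    have hJu : J ≤ u.ker := sup_le hfu hgu
    have hJv : J ≤ v.ker := sup_le hfv hgv
    have hfJ : f.ker ≤ J := le_sup_left
    have hJne : J ≠ f.ker := by
      intro hEq
      have hgf : g.ker ≤ f.ker := hEq ▸ (le_sup_right : g.ker ≤ J)
      exact hker_ne (Subgroup.eq_of_le_of_card_ge hgf (by omega)).symm
    have hd1 : Nat.card f.ker ∣ Nat.card J := Subgroup.card_dvd_of_le hfJ
    have hd2 : Nat.card J ∣ Nat.card u.ker := Subgroup.card_dvd_of_le hJu
    have hcJ : Nat.card J = 4 := by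
      rw [hku] at hd2
      rw [hkf] at hd1
      have hub : Nat.card J ≤ 4 := Nat.le_of_dvd (by norm_num) hd2
      have hcases : Nat.card J = 2 ∨ Nat.card J = 4 := by
        have hpos : 0 < Nat.card J := Nat.card_pos
        omega
      rcases hcases with h2 | h4
      · exact absurd ((Subgroup.eq_of_le_of_card_ge hfJ (by omega)).symm) hJne
      · exact h4
    have h1 : J = u.ker := Subgroup.eq_of_le_of_card_ge hJu (by omega)
    have h2 : J = v.ker := Subgroup.eq_of_le_of_card_ge hJv (by omega)
    rw [← h1, h2]
  -- build the comparison isomorphism t on Vab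
  have huv : ∀ x y : H, u x = u y → v x = v y := by
    intro x y hxy
    have : x * y⁻¹ ∈ u.ker := by
      rw [MonoidHom.mem_ker, map_mul, map_inv, hxy, mul_inv_cancel]
    rw [hkeq, MonoidHom.mem_ker, map_mul, map_inv] at this
    have := congrArg (· * v y) this
    simpa [mul_assoc] using this
  have hvu : ∀ x y : H, v x = v y → u x = u y := by
    intro x y hxy
    have : x * y⁻¹ ∈ v.ker := by
      rw [MonoidHom.mem_ker, map_mul, map_inv, hxy, mul_inv_cancel]
    rw [← hkeq, MonoidHom.mem_ker, map_mul, map_inv] at this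
    have := congrArg (· * u y) this
    simpa [mul_assoc] using this
  set t : Vab → Vab := fun a => v (surjInv husurj a) with ht
  have htu : ∀ x, t (u x) = v x := fun x => huv _ _ (surjInv_eq husurj (u x))
  have thom : ∀ a b, t (a * b) = t a * t b := by
    intro a b
    obtain ⟨x, rfl⟩ := husurj a
    obtain ⟨y, rfl⟩ := husurj b
    calc t (u x * u y) = t (u (x * y)) := by rw [map_mul]
    _ = v (x * y) := htu _
    _ = v x * v y := map_mul v x y
    _ = t (u x) * t (u y) := by rw [htu, htu]
  have tinj : ∀ a b : Vab, t a = t b → a = b := by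
    intro a b hab
    obtain ⟨x, rfl⟩ := husurj a
    obtain ⟨y, rfl⟩ := husurj b
    rw [htu, htu] at hab
    exact hvu x y hab
  obtain ⟨s, sinj, shom, scomm⟩ := lift_t t tinj thom
  have s1 : s 1 = 1 := by
    have h := shom 1 1
    rw [mul_one] at h
    exact (left_eq_mul.mp h)
  set sM : Q8' →* Q8' := MonoidHom.mk' s shom with hsM
  set h₀ : H →* Q8' × D4' := (sM.comp f).prod g with hh₀
  have hmem : ∀ x, h₀ x ∈ GG := by
    intro x
    show Φ (s (f x), g x) = 1
    show ψ (s (f x)) * (χ (g x))⁻¹ = 1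
    rw [scomm]
    show t (u x) * (v x)⁻¹ = 1
    rw [htu]
    exact mul_inv_cancel _
  set hG : H →* ↥GG := h₀.codRestrict GG hmem with hhG
  have hGinj : Injective hG := by
    rw [injective_iff_map_eq_one]
    intro x hx
    have h1 : s (f x) = 1 := congrArg Prod.fst (congrArg Subtype.val hx)
    have h2 : g x = 1 := congrArg Prod.snd (congrArg Subtype.val hx)
    have hfx : f x = 1 := sinj _ _ (by rw [h1, s1])
    -- x ∈ ker f ⊓ ker g, and the kernels are distinct of order 2
    by_contra hx1
    apply hker_ne
    ext z
    constructor
    · intro hz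
      by_cases hz1 : z = 1
      · rw [hz1]; exact g.ker.one_mem
      · have : z = x := eq_of_card_two hkf hz hfx hz1 hx1
        rw [this]; exact h2
    · intro hz
      by_cases hz1 : z = 1
      · rw [hz1]; exact f.ker.one_mem
      · have : z = x := eq_of_card_two hkg hz h2 hz1 hx1
        rw [this]; exact hfx
  have hGbij : Bijective hG := by
    rw [Nat.bijective_iff_injective_and_card]
    exact ⟨hGinj, by rw [hcard, cardGG]⟩
  exact ⟨MulEquiv.ofBijective hG hGbij⟩

/-- There is, up to isomorphism, a unique group of order 16 having both a quotient
isomorphic to `D₄` and a quotient isomorphic to `Q₈`; and any such group `H` has normal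
subgroups `N₁, N₂` with `N₁ ⊓ N₂ = {e}`, `H/N₁ ≅ D₄` and `H/N₂ ≅ ℤ/4ℤ`. -/
theorem stmt13 :
    (∃ (H : Type) (_ : Group H), Nat.card H = 16 ∧
      (∃ f : H →* DihedralGroup 4, Function.Surjective f) ∧
      (∃ f : H →* QuaternionGroup 2, Function.Surjective f)) ∧
    (∀ (H₁ H₂ : Type) [Group H₁] [Group H₂], Nat.card H₁ = 16 → Nat.card H₂ = 16 →
      (∃ f : H₁ →* DihedralGroup 4, Function.Surjective f) →
      (∃ f : H₁ →* QuaternionGroup 2, Function.Surjective f) →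
      (∃ f : H₂ →* DihedralGroup 4, Function.Surjective f) →
      (∃ f : H₂ →* QuaternionGroup 2, Function.Surjective f) →
      Nonempty (H₁ ≃* H₂)) ∧
    (∀ (H : Type) [Group H], Nat.card H = 16 →
      (∃ f : H →* DihedralGroup 4, Function.Surjective f) →
      (∃ f : H →* QuaternionGroup 2, Function.Surjective f) →
      ∃ N₁ N₂ : Subgroup H, N₁.Normal ∧ N₂.Normal ∧ N₁ ⊓ N₂ = ⊥ ∧
        (∃ f : H →* DihedralGroup 4, Function.Surjective f ∧ f.ker = N₁) ∧
        (∃ f : H →* Multiplicative (ZMod 4), Function.Surjective f ∧ f.ker = N₂)) := by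
  refine ⟨⟨↥GG, inferInstance, cardGG, ⟨fD, fD_surj⟩, ⟨fQ, fQ_surj⟩⟩, ?_, ?_⟩
  · intro H₁ H₂ _ _ hc1 hc2 hd1 hq1 hd2 hq2
    obtain ⟨e₁⟩ := key_iso H₁ hc1 hd1 hq1
    obtain ⟨e₂⟩ := key_iso H₂ hc2 hd2 hq2
    exact ⟨e₁.trans e₂.symm⟩
  · intro H _ hc hd hq
    obtain ⟨e⟩ := key_iso H hc hd hq
    refine ⟨(fD.comp e.toMonoidHom).ker, (cG.comp e.toMonoidHom).ker,
      inferInstance, inferInstance, ?_, ⟨fD.comp e.toMonoidHom, fD_surj.comp e.surjective, rfl⟩,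
      ⟨cG.comp e.toMonoidHom, cG_surj.comp e.surjective, rfl⟩⟩
    rw [Subgroup.eq_bot_iff_forall]
    intro x hx
    obtain ⟨h1, h2⟩ := Subgroup.mem_inf.mp hx
    have hz : e x = 1 := GG_bot (e x) h1 h2
    have := e.injective (by rw [hz, map_one] : e x = e 1)
    exact this
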